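/- arXiv:1105.5903 — 2 statements merged into one kernel-verified Lean document; each statement's English description precedes it below -/
import Mathlib

section
/- Under the uniform distribution on the ensemble G_{k,n}, the expectation of A_{u,v}(G) equals C(k,u) C(u(k-u), v) C(C(k,2) - u(k-u), n-v) / C(C(k,2), n). -/
open scoped Classical

noncomputable section

/-- Incidence matrix over F_2 of an edge labeling `e`. -/
def inc {k n : ℕ} (e : Fin n → Sym2 (Fin k)) : Matrix (Fin k) (Fin n) (ZMod 2) :=
  Matrix.of fun i j => if i ∈ e j then 1 else 0

/-- Hamming weight of a binary vector. -/
def wt {d : ℕ} (x : Fin d → ZMod 2) : ℕ := (Finset.univ.filter fun i => x i ≠ 0).card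

/-- `e` is a valid member of the ensemble `G_{k,n}`: an injective labeling of
edges by unordered pairs of distinct vertices. -/
def IsGraph {k n : ℕ} (e : Fin n → Sym2 (Fin k)) : Prop :=
  Function.Injective e ∧ ∀ j, ¬ (e j).IsDiag

/-- The simple graph determined by the edge labeling. -/
def toGraph {k n : ℕ} (e : Fin n → Sym2 (Fin k)) : SimpleGraph (Fin k) :=
  SimpleGraph.fromEdgeSet (Set.range e)

/-- The ensemble `G_{k,n}`. -/
def Ens (k n : ℕ) := {e : Fin n → Sym2 (Fin k) // IsGraph e}

instance (k n : ℕ) : Fintype (Ens k n) := Subtype.fintype _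

/-- The unordered pair `s` crosses the cut `(V1, V1ᶜ)`. -/
def crosses {k : ℕ} (V1 : Finset (Fin k)) (s : Sym2 (Fin k)) : Prop :=
  ∃ a b, s = s(a, b) ∧ a ∈ V1 ∧ b ∉ V1

/-- `E'` is a cut-set of the graph given by `e`. -/
def IsCutSet {k n : ℕ} (e : Fin n → Sym2 (Fin k)) (E' : Finset (Fin n)) : Prop :=
  ∃ V1 : Finset (Fin k), E' = Finset.univ.filter fun j => crosses V1 (e j)

/-- Cut-set weight distribution `B_v(G)`. -/
def Bv {k n : ℕ} (e : Fin n → Sym2 (Fin k)) (v : ℕ) : ℕ :=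
  Nat.card {E' : Finset (Fin n) // IsCutSet e E' ∧ E'.card = v}

/-- Input–output weight distribution `A_{u,v}(G)`. -/
def Auv {k n : ℕ} (e : Fin n → Sym2 (Fin k)) (u v : ℕ) : ℕ :=
  Nat.card {p : (Fin k → ZMod 2) × (Fin n → ZMod 2) //
    wt p.1 = u ∧ wt p.2 = v ∧ Matrix.vecMul p.1 (inc e) = p.2}

/-- Survivor subgraph after the edges in `E'` fail. -/
def survivor {k n : ℕ} (e : Fin n → Sym2 (Fin k)) (E' : Finset (Fin n)) : SimpleGraph (Fin k) :=
  SimpleGraph.fromEdgeSet (e '' {j | j ∉ E'})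

/-- Network failure probability of a connected graph. -/
def Pf {k n : ℕ} (e : Fin n → Sym2 (Fin k)) (ε : ℝ) : ℝ :=
  ∑ E' : Finset (Fin n),
    (if ¬ (survivor e E').Connected then ε ^ E'.card * (1 - ε) ^ (n - E'.card) else 0)

/-- Network failure probability, equal to 1 for unconnected graphs. -/
def PfFull {k n : ℕ} (e : Fin n → Sym2 (Fin k)) (ε : ℝ) : ℝ :=
  if (toGraph e).Connected then Pf e ε else 1

/-- Size `T(G)` of the left kernel of the incidence matrix. -/
def TG {k n : ℕ} (e : Fin n → Sym2 (Fin k)) : ℕ :=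
  Nat.card {m : Fin k → ZMod 2 // Matrix.vecMul m (inc e) = 0}

/-- Probability that a uniformly random graph of the ensemble is unconnected. -/
def PU (k n : ℕ) : ℝ :=
  (Nat.card {G : Ens k n // ¬ (toGraph G.1).Connected} : ℝ) / Nat.card (Ens k n)
/-!
Summing `A_{u,v}` over the ensemble and exchanging the two sums, one counts, for each of the
`C(k,u)` vectors `m` of weight `u`, the graphs with `wt (m M(G)) = v`. Over `F_2`, coordinate `j`
of `m M(G)` is nonzero exactly when edge `j` crosses the cut between the support of `m` and its
complement, and `u(k-u)` of the `C(k,2)` pairs cross it. So these graphs are the injective edge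
labelings in which exactly `v` of the `n` labels cross: `C(n,v) (u(k-u))_v (C(k,2)-u(k-u))_{n-v}`
of them, against `(C(k,2))_n` graphs in total; dividing gives the binomial formula.
-/

open Finset
open scoped Nat

section Embedding

variable {ι α : Type*}

def embeddingFiberEquiv (q : α → Prop) (T : Finset ι) :
    {f : ι ↪ α // ∀ j, q (f j) ↔ j ∈ T}
      ≃ ({j // j ∈ T} ↪ {a // q a}) × ({j // j ∉ T} ↪ {a // ¬ q a}) where
  toFun f := (f.1.subtypeMap fun j hj => (f.2 j).2 hj, f.1.subtypeMap fun j hj => mt (f.2 j).1 hj)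
  invFun gh := ⟨((Equiv.sumCompl (· ∈ T)).symm.toEmbedding.trans (gh.1.sumMap gh.2)).trans
      (Equiv.sumCompl q).toEmbedding, fun j => by
        by_cases hj : j ∈ T
        · simp [hj, Equiv.sumCompl_symm_apply_of_pos, (gh.1 ⟨j, hj⟩).2]
        · simp [hj, Equiv.sumCompl_symm_apply_of_neg, (gh.2 ⟨j, hj⟩).2]⟩
  left_inv f := by
    ext j
    by_cases hj : j ∈ T
    · simp [hj, Equiv.sumCompl_symm_apply_of_pos, Function.Embedding.subtypeMap, Subtype.map]
    · simp [hj, Equiv.sumCompl_symm_apply_of_neg, Function.Embedding.subtypeMap, Subtype.map]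
  right_inv gh := by
    ext j <;> simp [Equiv.sumCompl_symm_apply_of_pos, Function.Embedding.subtypeMap, Subtype.map]

theorem card_embedding_filter_card_eq [Fintype ι] [Fintype α] (q : α → Prop) (v : ℕ) :
    Nat.card {f : ι ↪ α // #{j | q (f j)} = v}
      = (Nat.card ι).choose v * ((Nat.card {a // q a}).descFactorial v
          * (Nat.card {a // ¬ q a}).descFactorial (Nat.card ι - v)) := by
  have fiber (T : {T : Finset ι // #T = v}) :
      Nat.card {f : ι ↪ α // ({j | q (f j)} : Finset ι) = T}
        = (Nat.card {a // q a}).descFactorial v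
          * (Nat.card {a // ¬ q a}).descFactorial (Nat.card ι - v) := by
    rw [Nat.card_congr ((Equiv.subtypeEquivRight fun f => by simp [Finset.ext_iff]).trans
      (embeddingFiberEquiv q T.1)), Nat.card_prod]
    simp [Nat.card_eq_fintype_card, Fintype.card_embedding_eq, Fintype.card_subtype_compl, T.2]
  rw [← Nat.card_congr (Equiv.sigmaSubtypeFiberEquivSubtype
    (fun f : ι ↪ α => ({j | q (f j)} : Finset ι)) (q := fun T => #T = v) fun _ => Iff.rfl),
    Nat.card_sigma]
  simp only [fiber, sum_const]
  simp

end Embedding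

section Cut

variable {k : ℕ}

lemma crosses_mk_iff (S : Finset (Fin k)) (a b : Fin k) :
    crosses S s(a, b) ↔ a ∈ S ∧ b ∉ S ∨ b ∈ S ∧ a ∉ S := by
  simp only [crosses, Sym2.eq_iff]
  constructor
  · rintro ⟨x, y, ⟨rfl, rfl⟩ | ⟨rfl, rfl⟩, hx, hy⟩
    exacts [Or.inl ⟨hx, hy⟩, Or.inr ⟨hx, hy⟩]
  · rintro (⟨ha, hb⟩ | ⟨hb, ha⟩)
    exacts [⟨a, b, Or.inl ⟨rfl, rfl⟩, ha, hb⟩, ⟨b, a, Or.inr ⟨rfl, rfl⟩, hb, ha⟩]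

lemma not_isDiag_of_crosses {S : Finset (Fin k)} {s : Sym2 (Fin k)} (h : crosses S s) :
    ¬ s.IsDiag := by
  obtain ⟨a, b, rfl, ha, hb⟩ := h
  rw [Sym2.mk_isDiag_iff]
  rintro rfl
  exact hb ha

def crossingEdge (S : Finset (Fin k)) (ab : {a // a ∈ S} × {b // b ∉ S}) :
    {s // crosses S s} :=
  ⟨s(ab.1.1, ab.2.1), _, _, rfl, ab.1.2, ab.2.2⟩

lemma crossingEdge_bijective (S : Finset (Fin k)) : Function.Bijective (crossingEdge S) := by
  refine ⟨fun ⟨a, b⟩ ⟨a', b'⟩ h => ?_,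
    fun ⟨s, a, b, hs, ha, hb⟩ => ⟨(⟨a, ha⟩, ⟨b, hb⟩), Subtype.ext hs.symm⟩⟩
  rcases Sym2.eq_iff.mp (congrArg Subtype.val h) with ⟨h1, h2⟩ | ⟨h1, -⟩
  · exact Prod.ext (Subtype.ext h1) (Subtype.ext h2)
  · exact absurd (h1 ▸ a.2) b'.2

lemma card_crosses (S : Finset (Fin k)) :
    Nat.card {s // crosses S s} = #S * (k - #S) := by
  rw [← Nat.card_eq_of_bijective _ (crossingEdge_bijective S), Nat.card_prod]
  simp [Nat.card_eq_fintype_card, Fintype.card_subtype_compl]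

lemma card_edge_crosses (S : Finset (Fin k)) :
    Nat.card {s : {s : Sym2 (Fin k) // ¬ s.IsDiag} // crosses S s} = #S * (k - #S) := by
  rw [Nat.card_congr (Equiv.subtypeSubtypeEquivSubtype not_isDiag_of_crosses), card_crosses]

lemma card_edge_not_crosses (S : Finset (Fin k)) :
    Nat.card {s : {s : Sym2 (Fin k) // ¬ s.IsDiag} // ¬ crosses S s}
      = k.choose 2 - #S * (k - #S) := by
  rw [Nat.card_eq_fintype_card, Fintype.card_subtype_compl, Sym2.card_subtype_not_diag,
    Fintype.card_fin, ← Nat.card_eq_fintype_card, card_edge_crosses]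

end Cut

section Incidence

variable {k n : ℕ}

lemma vecMul_inc_apply (m : Fin k → ZMod 2) (e : Fin n → Sym2 (Fin k)) (j : Fin n)
    {x y : Fin k} (hxy : x ≠ y) (hj : e j = s(x, y)) :
    Matrix.vecMul m (inc e) j = m x + m y := by
  have : ({i | i ∈ e j} : Finset (Fin k)) = {x, y} := by ext; simp [hj]
  simp only [Matrix.vecMul, dotProduct, inc, Matrix.of_apply, mul_ite, mul_one, mul_zero]
  rw [← Finset.sum_filter, this, Finset.sum_pair hxy]

lemma vecMul_inc_ne_zero_iff (m : Fin k → ZMod 2) (e : Fin n → Sym2 (Fin k)) (j : Fin n)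
    (hj : ¬ (e j).IsDiag) :
    Matrix.vecMul m (inc e) j ≠ 0 ↔ crosses {i | m i ≠ 0} (e j) := by
  induction h : e j using Sym2.ind with
  | _ x y =>
    rw [h, Sym2.mk_isDiag_iff] at hj
    rw [vecMul_inc_apply m e j hj h, crosses_mk_iff]
    simp only [mem_filter, mem_univ, true_and, not_not]
    generalize m x = a, m y = b
    revert a b; decide

end Incidence

def ensEquivEmbedding (k n : ℕ) : Ens k n ≃ (Fin n ↪ {s : Sym2 (Fin k) // ¬ s.IsDiag}) where
  toFun e := ⟨fun j => ⟨e.1 j, e.2.2 j⟩, fun _ _ h => e.2.1 (congrArg Subtype.val h)⟩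
  invFun f := ⟨fun j => (f j).1, fun _ _ h => f.injective (Subtype.ext h), fun j => (f j).2⟩
  left_inv _ := rfl
  right_inv _ := rfl

lemma card_ens (k n : ℕ) : Nat.card (Ens k n) = (k.choose 2).descFactorial n := by
  rw [Nat.card_congr (ensEquivEmbedding k n), Nat.card_eq_fintype_card, Fintype.card_embedding_eq,
    Sym2.card_subtype_not_diag, Fintype.card_fin, Fintype.card_fin]

lemma card_ens_wt_vecMul_inc_eq {k : ℕ} (n : ℕ) (m : Fin k → ZMod 2) (v : ℕ) :
    Nat.card {G : Ens k n // wt (Matrix.vecMul m (inc G.1)) = v}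
      = n.choose v * ((wt m * (k - wt m)).descFactorial v
          * (k.choose 2 - wt m * (k - wt m)).descFactorial (n - v)) := by
  rw [Nat.card_congr ((ensEquivEmbedding k n).subtypeEquiv
      (q := fun f => #{j | crosses {i | m i ≠ 0} (f j).1} = v) fun G => ?_),
    card_embedding_filter_card_eq (fun s : {s : Sym2 (Fin k) // ¬ s.IsDiag} =>
      crosses {i | m i ≠ 0} s.1), card_edge_crosses, card_edge_not_crosses, Nat.card_fin]
  · rfl
  · simp only [wt]
    rw [filter_congr fun j _ => vecMul_inc_ne_zero_iff m G.1 j (G.2.2 j)]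
    rfl

def binaryVectorEquivFinset (k : ℕ) : (Fin k → ZMod 2) ≃ Finset (Fin k) where
  toFun m := {i | m i ≠ 0}
  invFun S i := if i ∈ S then 1 else 0
  left_inv m := funext fun i => by
    have eq_one_of_ne_zero : ∀ a : ZMod 2, a ≠ 0 → a = 1 := by decide
    by_cases h : m i = 0
    · simp [h]
    · simp [eq_one_of_ne_zero _ h]
  right_inv S := by ext; simp

lemma card_wt_eq (k u : ℕ) : Nat.card {m : Fin k → ZMod 2 // wt m = u} = k.choose u := by
  rw [Nat.card_congr ((binaryVectorEquivFinset k).subtypeEquiv (p := fun m => wt m = u)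
      (q := fun S => #S = u) fun _ => Iff.rfl),
    Nat.card_eq_fintype_card, Fintype.card_finset_len, Fintype.card_fin]

lemma Auv_eq_card_filter {k n : ℕ} (e : Fin n → Sym2 (Fin k)) (u v : ℕ) :
    Auv e u v = #{m : Fin k → ZMod 2 | wt m = u ∧ wt (Matrix.vecMul m (inc e)) = v} := by
  rw [Auv, ← Fintype.card_subtype, ← Nat.card_eq_fintype_card]
  exact Nat.card_congr
    { toFun p := ⟨p.1.1, p.2.1, p.2.2.2 ▸ p.2.2.1⟩
      invFun m := ⟨(m.1, Matrix.vecMul m.1 (inc e)), m.2.1, m.2.2, rfl⟩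
      left_inv p := Subtype.ext (Prod.ext rfl p.2.2.2)
      right_inv _ := rfl }

lemma sum_Auv_eq (k n u v : ℕ) :
    ∑ G : Ens k n, Auv G.1 u v
      = k.choose u * (n.choose v * ((u * (k - u)).descFactorial v
          * (k.choose 2 - u * (k - u)).descFactorial (n - v))) := by
  calc ∑ G : Ens k n, Auv G.1 u v
      = ∑ m : Fin k → ZMod 2,
          #{G : Ens k n | wt m = u ∧ wt (Matrix.vecMul m (inc G.1)) = v} := by
        simp only [Auv_eq_card_filter]
        exact sum_card_bipartiteAbove_eq_sum_card_bipartiteBelow _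
    _ = ∑ m with wt m = u, Nat.card {G : Ens k n // wt (Matrix.vecMul m (inc G.1)) = v} := by
        rw [sum_filter]
        refine sum_congr rfl fun m _ => ?_
        split_ifs with hm <;> simp [hm, Nat.card_eq_fintype_card, Fintype.card_subtype]
    _ = _ := by
        rw [sum_congr rfl fun m hm => by rw [card_ens_wt_vecMul_inc_eq, (mem_filter.mp hm).2],
          sum_const, smul_eq_mul, ← Fintype.card_subtype, ← Nat.card_eq_fintype_card,
          card_wt_eq]

lemma cast_choose_mul_descFactorial_div_descFactorial {n v : ℕ} (hv : v ≤ n) (a b N : ℕ) :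
    ((n.choose v * (a.descFactorial v * b.descFactorial (n - v)) : ℕ) : ℝ) / N.descFactorial n
      = (a.choose v * b.choose (n - v) : ℝ) / N.choose n := by
  have num : n.choose v * (a.descFactorial v * b.descFactorial (n - v))
      = n ! * (a.choose v * b.choose (n - v)) := by
    rw [Nat.descFactorial_eq_factorial_mul_choose, Nat.descFactorial_eq_factorial_mul_choose,
      ← Nat.choose_mul_factorial_mul_factorial hv]
    ring
  rw [num, Nat.descFactorial_eq_factorial_mul_choose, Nat.cast_mul, Nat.cast_mul, Nat.cast_mul,
    mul_div_mul_left _ _ (by positivity)]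

theorem stmt7_general (k n u v : ℕ) (hv : v ≤ n) :
    (∑ G : Ens k n, (Auv G.1 u v : ℝ)) / Nat.card (Ens k n)
      = (k.choose u * (u * (k - u)).choose v
            * (k.choose 2 - u * (k - u)).choose (n - v) : ℝ) / (k.choose 2).choose n := by
  rw [← Nat.cast_sum, sum_Auv_eq, card_ens, Nat.cast_mul, mul_div_assoc,
    cast_choose_mul_descFactorial_div_descFactorial hv]
  ring

theorem stmt7 (k n u v : ℕ) (hu : u ≤ k) (hv : v ≤ n) :
    (∑ G : Ens k n, (Auv G.1 u v : ℝ)) / Nat.card (Ens k n)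
      = (k.choose u * (u * (k - u)).choose v
            * (k.choose 2 - u * (k - u)).choose (n - v) : ℝ) / (k.choose 2).choose n :=
  stmt7_general k n u v hv
end
end

section
/- The number of graphs in G_{k,n} having at least one isolated vertex is at least n! k ( C(C(k-1,2), n) - (k-1) C(C(k-2,2), n) ). -/
open scoped Classical

noncomputable section

/-!
A graph has an isolated vertex iff it avoids some vertex `i`, so the graphs in question form the
union over `i` of the sets `graphsAvoiding n {i}`. A graph avoiding a vertex set `S` is an injective
labelling of `n` edges by the `C(k - |S|, 2)` pairs of vertices outside `S`, so there are
`n! C(C(k - |S|, 2), n)` of them, and `graphsAvoiding n {i} ∩ graphsAvoiding n {j}` avoids `{i, j}`.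
The bound is the first Bonferroni inequality `|⋃ Aᵢ| ≥ ∑ |Aᵢ| - ∑_{i ≠ j} |Aᵢ ∩ Aⱼ|`, taken over
ordered pairs `i ≠ j`, which is where the factor `k - 1` (rather than `(k - 1) / 2`) comes from.
-/

open Finset

theorem Finset.sum_card_le_card_biUnion_add_sum_card_inter {ι α : Type*} [DecidableEq ι]
    [DecidableEq α] (s : Finset ι) (A : ι → Finset α) :
    ∑ i ∈ s, #(A i) ≤ #(s.biUnion A) + ∑ i ∈ s, ∑ j ∈ s.erase i, #(A i ∩ A j) := by
  induction s using Finset.induction_on with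
  | empty => simp
  | @insert a s ha ih =>
    have h_union : #(A a) + #(s.biUnion A) = #(A a ∪ s.biUnion A) + #(A a ∩ s.biUnion A) :=
      (card_union_add_card_inter _ _).symm
    have h_inter : #(A a ∩ s.biUnion A) ≤ ∑ j ∈ s, #(A a ∩ A j) := by
      rw [inter_biUnion]
      exact card_biUnion_le
    have h_pairs : ∑ i ∈ s, ∑ j ∈ s.erase i, #(A i ∩ A j)
        ≤ ∑ i ∈ s, ∑ j ∈ (insert a s).erase i, #(A i ∩ A j) :=
      sum_le_sum fun i _ =>
        sum_le_sum_of_subset (erase_subset_erase _ (subset_insert _ _))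
    rw [sum_insert ha, biUnion_insert, sum_insert ha, erase_insert ha]
    omega

theorem Finset.card_sym2_filter_not_isDiag {α : Type*} [DecidableEq α] (s : Finset α) :
    #{p ∈ s.sym2 | ¬p.IsDiag} = (#s).choose 2 := by
  rw [sym2_eq_image, Sym2.filter_image_mk_not_isDiag, Sym2.card_image_offDiag]

theorem Nat.card_injective_mapsTo {α β : Type*} [Fintype α] (t : Finset β) :
    Nat.card {f : α → β // Function.Injective f ∧ ∀ a, f a ∈ t}
      = (#t).descFactorial (Fintype.card α) := by
  let toEmb : {f : α → β // Function.Injective f ∧ ∀ a, f a ∈ t} ≃ (α ↪ t) :=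
    { toFun f := ⟨fun a => ⟨f.1 a, f.2.2 a⟩, fun a b h => f.2.1 (congrArg Subtype.val h)⟩
      invFun g := ⟨fun a => g a, Subtype.val_injective.comp g.injective, fun a => (g a).2⟩
      left_inv _ := rfl
      right_inv _ := rfl }
  rw [Nat.card_congr toEmb, Nat.card_eq_fintype_card, Fintype.card_embedding_eq,
    Fintype.card_coe]

def graphsAvoiding {k : ℕ} (n : ℕ) (S : Finset (Fin k)) : Finset (Fin n → Sym2 (Fin k)) :=
  {e | IsGraph e ∧ ∀ i ∈ S, ∀ j, i ∉ e j}

theorem graphsAvoiding_inter {k : ℕ} (n : ℕ) (S T : Finset (Fin k)) :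
    graphsAvoiding n S ∩ graphsAvoiding n T = graphsAvoiding n (S ∪ T) := by
  ext e
  simp only [graphsAvoiding, mem_inter, mem_filter_univ, mem_union]
  grind

theorem card_graphsAvoiding {k : ℕ} (n : ℕ) (S : Finset (Fin k)) :
    #(graphsAvoiding n S) = ((k - #S).choose 2).descFactorial n := by
  set edges := {p ∈ Sᶜ.sym2 | ¬p.IsDiag}
  have h_mem : ∀ e : Fin n → Sym2 (Fin k),
      e ∈ graphsAvoiding n S ↔ Function.Injective e ∧ ∀ j, e j ∈ edges := by
    intro e
    simp only [graphsAvoiding, IsGraph, edges, mem_filter, mem_sym2_iff, mem_compl]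
    grind
  calc #(graphsAvoiding n S)
      = Nat.card {e : Fin n → Sym2 (Fin k) // Function.Injective e ∧ ∀ j, e j ∈ edges} := by
        rw [← Nat.card_eq_finsetCard]
        exact Nat.card_congr (Equiv.subtypeEquivRight h_mem)
    _ = (#edges).descFactorial n := by rw [Nat.card_injective_mapsTo, Fintype.card_fin]
    _ = ((k - #S).choose 2).descFactorial n := by
        rw [card_sym2_filter_not_isDiag, card_compl, Fintype.card_fin]

theorem stmt13_general (k n : ℕ) :
    (Nat.card {e : Fin n → Sym2 (Fin k) // IsGraph e ∧ ∃ i, ∀ j, i ∉ e j} : ℤ)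
      ≥ (n.factorial : ℤ) * k * ((((k - 1).choose 2).choose n : ℤ)
          - ((k - 1 : ℕ) : ℤ) * (((k - 2).choose 2).choose n : ℤ)) := by
  set A : Fin k → Finset (Fin n → Sym2 (Fin k)) := fun i => graphsAvoiding n {i}
  have h_union : Nat.card {e : Fin n → Sym2 (Fin k) // IsGraph e ∧ ∃ i, ∀ j, i ∉ e j}
      = #(univ.biUnion A) := by
    rw [← Nat.card_eq_finsetCard]
    refine Nat.card_congr (Equiv.subtypeEquivRight fun e => ?_)
    simp [A, graphsAvoiding]
  have h_single : ∀ i, #(A i) = ((k - 1).choose 2).descFactorial n := fun i => by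
    rw [card_graphsAvoiding, card_singleton]
  have h_pair : ∀ i, ∀ j ∈ univ.erase i, #(A i ∩ A j) = ((k - 2).choose 2).descFactorial n := by
    intro i j hj
    rw [graphsAvoiding_inter, ← insert_eq, card_graphsAvoiding,
      card_pair (ne_of_mem_erase hj).symm]
  have h_bonf := sum_card_le_card_biUnion_add_sum_card_inter univ A
  simp only [h_single, sum_congr rfl fun i _ => sum_congr rfl (h_pair i), sum_const,
    card_erase_of_mem (mem_univ _), card_univ, Fintype.card_fin, smul_eq_mul,
    Nat.descFactorial_eq_factorial_mul_choose] at h_bonf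
  rw [h_union]
  zify at h_bonf
  linarith

theorem stmt13 (k n : ℕ) (hk : 2 ≤ k) :
    (Nat.card {e : Fin n → Sym2 (Fin k) // IsGraph e ∧ ∃ i, ∀ j, i ∉ e j} : ℤ)
      ≥ (n.factorial : ℤ) * k * ((((k - 1).choose 2).choose n : ℤ)
          - ((k - 1 : ℕ) : ℤ) * (((k - 2).choose 2).choose n : ℤ)) :=
  stmt13_general k n
end
end
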